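/- arXiv:2510.21700 — 5 statements merged into one kernel-verified Lean document; each statement's English description precedes it below -/
import Mathlib

section
/- Let G be an unweighted graph with a partition of V(G) into connected clusters such that every region R ∈ 𝓡 admits, between any two of its vertices, a path in G intersecting at most β clusters. Contract each cluster to a supernode forming graph Ĥ, attach each region R as a pendant vertex to a cluster intersecting R, and weight each edge by α+1. Then for every edge (R_a, R_b) of the contact graph G_𝓡, the distance between the pendant vertices of R_a and R_b in H is at most (2β+1)(α+1). -/
variable {V ι ρ : Type*}

/-- Contact graph of an indexed family of regions: an edge between two distinct regions
iff they share a vertex or contain adjacent vertices of `G`. -/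
def contactGraphIdx (G : SimpleGraph V) (Reg : ρ → Set V) : SimpleGraph ρ :=
  SimpleGraph.fromRel (fun a b => ∃ v1 ∈ Reg a, ∃ v2 ∈ Reg b, v1 = v2 ∨ G.Adj v1 v2)

/-- The emulator graph `H`: supernodes are the clusters (contracted), two clusters are
adjacent iff they contain adjacent vertices of `G`, and each region is attached as a
pendant vertex to its representative cluster. -/
def clusterEmulator (G : SimpleGraph V) (C : ι → Set V) (rep : ρ → ι) :
    SimpleGraph (ι ⊕ ρ) :=
  SimpleGraph.fromRel (fun x y =>
    match x, y with
    | Sum.inl i, Sum.inl j => ∃ u ∈ C i, ∃ v ∈ C j, G.Adj u v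
    | Sum.inl i, Sum.inr r => i = rep r
    | _, _ => False)


/-- Lifting a walk in `G` to a walk among the cluster supernodes of the emulator. -/
lemma clusterEmulator_walk_lift (G : SimpleGraph V) (C : ι → Set V) (rep : ρ → ι)
    (cl : V → ι) (hcl : ∀ v, v ∈ C (cl v)) {u v : V} (p : G.Walk u v) :
    ∃ w : (clusterEmulator G C rep).Walk (Sum.inl (cl u)) (Sum.inl (cl v)),
      ∀ x ∈ w.support, ∃ y ∈ p.support, x = Sum.inl (cl y) := by
  induction p with
  | nil =>
    refine ⟨SimpleGraph.Walk.nil, ?_⟩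
    intro x hx
    simp only [SimpleGraph.Walk.support_nil, List.mem_singleton] at hx
    exact ⟨_, by simp, hx⟩
  | @cons a b c hab q ih =>
    obtain ⟨w, hw⟩ := ih
    by_cases hc : cl a = cl b
    · refine ⟨w.copy (by rw [hc]) rfl, ?_⟩
      intro x hx
      rw [SimpleGraph.Walk.support_copy] at hx
      obtain ⟨y, hy, hxy⟩ := hw x hx
      exact ⟨y, by simp [hy], hxy⟩
    · have hadj : (clusterEmulator G C rep).Adj (Sum.inl (cl a)) (Sum.inl (cl b)) := by
        refine ⟨by simpa using hc, Or.inl ?_⟩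
        exact ⟨a, hcl a, b, hcl b, hab⟩
      refine ⟨SimpleGraph.Walk.cons hadj w, ?_⟩
      intro x hx
      rw [SimpleGraph.Walk.support_cons, List.mem_cons] at hx
      rcases hx with hx | hx
      · exact ⟨a, by simp, hx⟩
      · obtain ⟨y, hy, hxy⟩ := hw x hx
        exact ⟨y, by simp [hy], hxy⟩

/-- Upper bound for the emulator: for every edge `(R_a, R_b)` of the contact graph, the
weighted distance (each edge weighing `α+1`) in `H` between the pendant vertices of
`R_a` and `R_b` is at most `(2β+1)(α+1)`. -/
theorem emulator_edge_upper_bound (G : SimpleGraph V) (C : ι → Set V) (Reg : ρ → Set V)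
    (α β : ℕ)
    (hpart : ∀ v : V, ∃! i : ι, v ∈ C i)
    (hCconn : ∀ i : ι, (G.induce (C i)).Connected)
    (hRconn : ∀ r : ρ, (G.induce (Reg r)).Connected)
    (hscat : ∀ r : ρ, ∀ u ∈ Reg r, ∀ v ∈ Reg r, ∃ p : G.Walk u v, ∃ s : Finset ι,
      s.card ≤ β ∧ ∀ x ∈ p.support, ∀ i : ι, x ∈ C i → i ∈ s)
    (rep : ρ → ι) (hrep : ∀ r : ρ, (C (rep r) ∩ Reg r).Nonempty) :
    ∀ r_a r_b : ρ, (contactGraphIdx G Reg).Adj r_a r_b →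
      ((α : ℕ∞) + 1) * (clusterEmulator G C rep).edist (Sum.inr r_a) (Sum.inr r_b) ≤
        (2 * (β : ℕ∞) + 1) * ((α : ℕ∞) + 1) := by
  classical
  intro r_a r_b hab
  set H := clusterEmulator G C rep with hH
  -- the cluster of a vertex
  set cl : V → ι := fun v => (hpart v).choose with hcl_def
  have hcl : ∀ v, v ∈ C (cl v) := fun v => (hpart v).choose_spec.1
  have hcl_unique : ∀ v i, v ∈ C i → i = cl v := fun v i hi =>
    (hpart v).choose_spec.2 i hi
  -- extract the adjacency witnesses
  obtain ⟨-, hrel⟩ := hab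
  -- pendant edges
  have hpend : ∀ r : ρ, H.Adj (Sum.inr r) (Sum.inl (rep r)) := by
    intro r
    exact SimpleGraph.Adj.symm ⟨by simp, Or.inl rfl⟩
  -- segment bound: from a vertex of a region to another vertex of the same region,
  -- the cluster distance plus one is at most β
  have hseg : ∀ r : ρ, ∀ u ∈ Reg r, ∀ v ∈ Reg r,
      H.edist (Sum.inl (cl u)) (Sum.inl (cl v)) + 1 ≤ (β : ℕ∞) := by
    intro r u hu v hv
    obtain ⟨p, s, hs, hps⟩ := hscat r u hu v hv
    obtain ⟨w, hw⟩ := clusterEmulator_walk_lift G C rep cl hcl p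
    have hpath := w.bypass_isPath
    have hsub : w.bypass.support.toFinset ⊆ s.image Sum.inl := by
      intro x hx
      rw [List.mem_toFinset] at hx
      obtain ⟨y, hy, hxy⟩ := hw x (w.support_bypass_subset hx)
      rw [Finset.mem_image]
      exact ⟨cl y, hps y hy (cl y) (hcl y), hxy.symm⟩
    have hcard : w.bypass.support.length ≤ s.card := by
      calc w.bypass.support.length = w.bypass.support.toFinset.card :=
            (List.toFinset_card_of_nodup hpath.support_nodup).symm
        _ ≤ (s.image Sum.inl).card := Finset.card_le_card hsub
        _ ≤ s.card := Finset.card_image_le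
    have hlen : w.bypass.length + 1 ≤ β := by
      have := w.bypass.length_support
      omega
    calc H.edist (Sum.inl (cl u)) (Sum.inl (cl v)) + 1
        ≤ (w.bypass.length : ℕ∞) + 1 := by
          gcongr
          exact w.bypass.edist_le
      _ = ((w.bypass.length + 1 : ℕ) : ℕ∞) := by push_cast; ring
      _ ≤ (β : ℕ∞) := by exact_mod_cast hlen
  -- the middle step
  obtain ⟨v1, hv1, v2, hv2, hmid⟩ := hrel.elim id
    (fun ⟨v1, hv1, v2, hv2, h⟩ => ⟨v2, hv2, v1, hv1, h.imp Eq.symm SimpleGraph.Adj.symm⟩)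
  have hmid' : H.edist (Sum.inl (cl v1)) (Sum.inl (cl v2)) ≤ 1 := by
    by_cases hc : cl v1 = cl v2
    · rw [hc, SimpleGraph.edist_self]; exact zero_le_one
    · rcases hmid with h | h
      · exact absurd (by rw [h]) hc
      · have hadj : H.Adj (Sum.inl (cl v1)) (Sum.inl (cl v2)) :=
          ⟨by simpa using hc, Or.inl ⟨v1, hcl v1, v2, hcl v2, h⟩⟩
        calc H.edist (Sum.inl (cl v1)) (Sum.inl (cl v2))
            ≤ (SimpleGraph.Walk.cons hadj SimpleGraph.Walk.nil).length := by
              exact SimpleGraph.Walk.edist_le _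
          _ = 1 := by simp
  -- representative points
  obtain ⟨ua, hua_C, hua_R⟩ := hrep r_a
  obtain ⟨ub, hub_C, hub_R⟩ := hrep r_b
  have hua_cl : cl ua = rep r_a := (hcl_unique ua (rep r_a) hua_C).symm
  have hub_cl : cl ub = rep r_b := (hcl_unique ub (rep r_b) hub_C).symm
  have d1 := hseg r_a ua hua_R v1 hv1
  have d2 := hseg r_b v2 hv2 ub hub_R
  rw [hua_cl] at d1
  rw [hub_cl] at d2
  -- assemble the distance bound
  have hdist : H.edist (Sum.inr r_a) (Sum.inr r_b) ≤ 2 * (β : ℕ∞) + 1 := by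
    have t1 : H.edist (Sum.inr r_a) (Sum.inr r_b) ≤
        H.edist (Sum.inr r_a) (Sum.inl (rep r_a)) +
        H.edist (Sum.inl (rep r_a)) (Sum.inl (cl v1)) +
        H.edist (Sum.inl (cl v1)) (Sum.inl (cl v2)) +
        H.edist (Sum.inl (cl v2)) (Sum.inl (rep r_b)) +
        H.edist (Sum.inl (rep r_b)) (Sum.inr r_b) := by
      calc H.edist (Sum.inr r_a) (Sum.inr r_b)
          ≤ H.edist (Sum.inr r_a) (Sum.inl (rep r_a)) +
            H.edist (Sum.inl (rep r_a)) (Sum.inr r_b) := SimpleGraph.edist_triangle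
        _ ≤ H.edist (Sum.inr r_a) (Sum.inl (rep r_a)) +
            (H.edist (Sum.inl (rep r_a)) (Sum.inl (cl v1)) +
             H.edist (Sum.inl (cl v1)) (Sum.inr r_b)) := by
              gcongr; exact SimpleGraph.edist_triangle
        _ ≤ H.edist (Sum.inr r_a) (Sum.inl (rep r_a)) +
            (H.edist (Sum.inl (rep r_a)) (Sum.inl (cl v1)) +
             (H.edist (Sum.inl (cl v1)) (Sum.inl (cl v2)) +
              H.edist (Sum.inl (cl v2)) (Sum.inr r_b))) := by
              gcongr; exact SimpleGraph.edist_triangle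
        _ ≤ H.edist (Sum.inr r_a) (Sum.inl (rep r_a)) +
            (H.edist (Sum.inl (rep r_a)) (Sum.inl (cl v1)) +
             (H.edist (Sum.inl (cl v1)) (Sum.inl (cl v2)) +
              (H.edist (Sum.inl (cl v2)) (Sum.inl (rep r_b)) +
               H.edist (Sum.inl (rep r_b)) (Sum.inr r_b)))) := by
              gcongr; exact SimpleGraph.edist_triangle
        _ = _ := by ring
    have adj_edist : ∀ {x y : ι ⊕ ρ}, H.Adj x y → H.edist x y ≤ 1 := by
      intro x y h
      calc H.edist x y ≤ (SimpleGraph.Walk.cons h SimpleGraph.Walk.nil).length :=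
            SimpleGraph.Walk.edist_le _
        _ = 1 := by simp
    have e1 : H.edist (Sum.inr r_a) (Sum.inl (rep r_a)) ≤ 1 := adj_edist (hpend r_a)
    have e2 : H.edist (Sum.inl (rep r_b)) (Sum.inr r_b) ≤ 1 :=
      adj_edist ((hpend r_b).symm)
    calc H.edist (Sum.inr r_a) (Sum.inr r_b)
        ≤ 1 + H.edist (Sum.inl (rep r_a)) (Sum.inl (cl v1)) +
          H.edist (Sum.inl (cl v1)) (Sum.inl (cl v2)) +
          H.edist (Sum.inl (cl v2)) (Sum.inl (rep r_b)) + 1 := by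
          refine t1.trans ?_; gcongr
      _ = (H.edist (Sum.inl (rep r_a)) (Sum.inl (cl v1)) + 1) +
          (H.edist (Sum.inl (cl v2)) (Sum.inl (rep r_b)) + 1) +
          H.edist (Sum.inl (cl v1)) (Sum.inl (cl v2)) := by ring
      _ ≤ (β : ℕ∞) + (β : ℕ∞) + 1 := by gcongr
      _ = 2 * (β : ℕ∞) + 1 := by ring
  calc ((α : ℕ∞) + 1) * H.edist (Sum.inr r_a) (Sum.inr r_b)
      ≤ ((α : ℕ∞) + 1) * (2 * (β : ℕ∞) + 1) := by gcongr
    _ = (2 * (β : ℕ∞) + 1) * ((α : ℕ∞) + 1) := mul_comm _ _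
end

section
/- Let G be a graph, and suppose clusters are built by the following process: each cluster is initialized as a connected vertex set, and thereafter vertices are added to a cluster C only along a path P in G from a new vertex v to some already-assigned vertex of C, adding the maximal unassigned prefix of P and assigning it to the cluster containing the first assigned vertex on P. Then at all times every cluster induces a connected subgraph of G. -/
open Classical
variable {V ι : Type*}

/-!
The prefix `p.getVert 0, …, p.getVert (k - 1)` together with `p.getVert k` is the support of the
walk `p.take k`, hence connected. Relabelling the prefix by `c` leaves every other cluster
unchanged, because the prefix was unassigned, and enlarges cluster `c` by the prefix; since the
prefix meets cluster `c` in `p.getVert k`, the union of two connected sets stays connected.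
-/

namespace SimpleGraph.Walk

lemma mem_support_take_iff {G : SimpleGraph V} {u v x : V} (p : G.Walk u v) (k : ℕ) :
    x ∈ (p.take k).support ↔ ∃ j ≤ k, p.getVert j = x := by
  rw [mem_support_iff_exists_getVert]
  simp only [take_getVert, take_length]
  constructor
  · rintro ⟨n, rfl, -⟩
    exact ⟨k ⊓ n, inf_le_left, rfl⟩
  · rintro ⟨j, hj, rfl⟩
    refine ⟨j ⊓ p.length, ?_, le_inf_iff.mpr ⟨inf_le_left.trans hj, inf_le_right⟩⟩
    rw [inf_of_le_right (inf_le_left.trans hj)]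
    rcases le_total j p.length with h | h
    · rw [inf_of_le_left h]
    · rw [inf_of_le_right h, getVert_of_length_le _ h, getVert_length]

lemma setOf_getVert_lt_union_eq_support_take_union {G : SimpleGraph V} {u v : V} (p : G.Walk u v)
    {k : ℕ} {s : Set V} (hk : p.getVert k ∈ s) :
    {x | ∃ j < k, p.getVert j = x} ∪ s = {x | x ∈ (p.take k).support} ∪ s := by
  ext x
  simp only [Set.mem_union, Set.mem_ofPred_eq, p.mem_support_take_iff]
  constructor
  · rintro (⟨j, hj, rfl⟩ | hx)
    exacts [Or.inl ⟨j, hj.le, rfl⟩, Or.inr hx]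
  · rintro (⟨j, hj, rfl⟩ | hx)
    · rcases hj.lt_or_eq with hj | rfl
      exacts [Or.inl ⟨j, hj, rfl⟩, Or.inr hk]
    · exact Or.inr hx

end SimpleGraph.Walk

lemma setOf_ite_eq_some_of_ne (P : V → Prop) [DecidablePred P] (f : V → Option ι) {c i : ι}
    (hP : ∀ x, P x → f x = none) (hic : i ≠ c) :
    {x | (if P x then some c else f x) = some i} = {x | f x = some i} := by
  ext x
  by_cases hx : P x <;> simp [hx, hP, Ne.symm hic]

lemma setOf_ite_eq_some_self (P : V → Prop) [DecidablePred P] (f : V → Option ι) (c : ι) :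
    {x | (if P x then some c else f x) = some c} = {x | P x} ∪ {x | f x = some c} := by
  ext x
  by_cases hx : P x <;> simp [hx]

theorem assign_preserves_connected_general (G : SimpleGraph V) (f : V → Option ι)
    (hinv : ∀ i : ι, {x | f x = some i}.Nonempty → (G.induce {x | f x = some i}).Connected)
    {v t : V} (p : G.Walk v t)
    (k : ℕ)
    (hprefix : ∀ j < k, f (p.getVert j) = none)
    (c : ι) (hc : f (p.getVert k) = some c) :
    ∀ i : ι,
      {x | (if ∃ j < k, p.getVert j = x then some c else f x) = some i}.Nonempty →
      (G.induce {x | (if ∃ j < k, p.getVert j = x then some c else f x) = some i}).Connected := by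
  intro i hne
  by_cases hic : i = c
  · subst hic
    rw [setOf_ite_eq_some_self, p.setOf_getVert_lt_union_eq_support_take_union hc]
    exact G.induce_union_connected (p.take k).connected_induce_support.preconnected
      (hinv i ⟨_, hc⟩).preconnected ⟨p.getVert k, (p.take k).end_mem_support, hc⟩
  · have hunassigned : ∀ x, (∃ j < k, p.getVert j = x) → f x = none := by
      rintro _ ⟨j, hj, rfl⟩
      exact hprefix j hj
    rw [setOf_ite_eq_some_of_ne _ f hunassigned hic] at hne ⊢
    exact hinv i hne

/-- One step of the `Assign` procedure preserves the invariant that every cluster induces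
a connected subgraph: given a walk from an unassigned vertex `v` to an assigned vertex,
assigning the maximal unassigned prefix of the walk to the cluster of the first assigned
vertex on it keeps all clusters connected. -/
theorem assign_preserves_connected (G : SimpleGraph V) (f : V → Option ι)
    (hinv : ∀ i : ι, {x | f x = some i}.Nonempty → (G.induce {x | f x = some i}).Connected)
    {v t : V} (p : G.Walk v t) (hv : f v = none)
    (k : ℕ) (hk : k ≤ p.length)
    (hprefix : ∀ j < k, f (p.getVert j) = none)
    (c : ι) (hc : f (p.getVert k) = some c) :
    ∀ i : ι,
      {x | (if ∃ j < k, p.getVert j = x then some c else f x) = some i}.Nonempty →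
      (G.induce {x | (if ∃ j < k, p.getVert j = x then some c else f x) = some i}).Connected :=
  assign_preserves_connected_general G f hinv p k hprefix c hc
end

section
/- Let G be a graph, 𝓡 a family of regions, and 𝓡' a shattering of 𝓡 (every member of 𝓡' is contained in some member of 𝓡). Let π be a path in the contact graph of 𝓡 all of whose regions also belong to 𝓡'. If π is a shortest path in the contact graph of 𝓡, then π is a shortest path in the contact graph of 𝓡' (between its endpoints). -/
variable {V : Type*}

/-- Contact graph of a family of regions. -/
def contactGraph (G : SimpleGraph V) (F : Set (Set V)) : SimpleGraph F :=
  SimpleGraph.fromRel (fun A B => ∃ v1 ∈ (A : Set V), ∃ v2 ∈ (B : Set V), v1 = v2 ∨ G.Adj v1 v2)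

lemma contactGraph_adj {G : SimpleGraph V} {F : Set (Set V)} {X Y : F} :
    (contactGraph G F).Adj X Y ↔ X ≠ Y ∧
      ((∃ v1 ∈ (X : Set V), ∃ v2 ∈ (Y : Set V), v1 = v2 ∨ G.Adj v1 v2) ∨
       (∃ v1 ∈ (Y : Set V), ∃ v2 ∈ (X : Set V), v1 = v2 ∨ G.Adj v1 v2)) := by
  simp [contactGraph, SimpleGraph.fromRel_adj]

/-- Forward: a walk in the contact graph of `𝓡` whose regions all lie in `𝓡'` gives
a walk of the same length in the contact graph of `𝓡'`. -/
lemma forward_walk {G : SimpleGraph V} {𝓡 𝓡' : Set (Set V)} :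
    ∀ {X Y : 𝓡} (p : (contactGraph G 𝓡).Walk X Y)
      (hs : ∀ Z ∈ p.support, (Z : Set V) ∈ 𝓡'),
    ∃ q : (contactGraph G 𝓡').Walk ⟨(X : Set V), hs X p.start_mem_support⟩
        ⟨(Y : Set V), hs Y p.end_mem_support⟩, q.length = p.length := by
  intro X Y p
  induction p with
  | nil => exact fun hs => ⟨SimpleGraph.Walk.nil, rfl⟩
  | cons h p ih =>
    intro hs
    rename_i u v w
    have hs' : ∀ Z ∈ p.support, (Z : Set V) ∈ 𝓡' := fun Z hZ =>
      hs Z (by simp [SimpleGraph.Walk.support_cons, hZ])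
    obtain ⟨q, hq⟩ := ih hs'
    have hadj : (contactGraph G 𝓡').Adj ⟨(u : Set V), hs u (SimpleGraph.Walk.cons h p).start_mem_support⟩
        ⟨(v : Set V), hs' v p.start_mem_support⟩ := by
      rw [contactGraph_adj] at h ⊢
      refine ⟨?_, h.2⟩
      intro heq
      have : (u : Set V) = (v : Set V) := by injection heq
      exact h.1 (Subtype.ext this)
    exact ⟨SimpleGraph.Walk.cons hadj q, by simp [hq]⟩

/-- Pullback: a walk in the contact graph of `𝓡'` pulls back to a walk of at most the
same length in the contact graph of `𝓡`, via a choice of superregions. -/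
lemma pullback_walk {G : SimpleGraph V} {𝓡 𝓡' : Set (Set V)} (g : 𝓡' → 𝓡)
    (hg : ∀ X : 𝓡', (X : Set V) ⊆ ((g X : 𝓡) : Set V)) :
    ∀ {X Y : 𝓡'} (p : (contactGraph G 𝓡').Walk X Y),
    ∃ w : (contactGraph G 𝓡).Walk (g X) (g Y), w.length ≤ p.length := by
  intro X Y p
  induction p with
  | nil => exact ⟨SimpleGraph.Walk.nil, le_rfl⟩
  | cons h p ih =>
    rename_i u v w
    obtain ⟨q, hq⟩ := ih
    by_cases heq : g u = g v
    · exact ⟨q.copy heq.symm rfl, by simp [hq.trans (Nat.le_succ _)]⟩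
    · rw [contactGraph_adj] at h
      have hrel : (∃ v1 ∈ ((g u : 𝓡) : Set V), ∃ v2 ∈ ((g v : 𝓡) : Set V), v1 = v2 ∨ G.Adj v1 v2) ∨
          (∃ v1 ∈ ((g v : 𝓡) : Set V), ∃ v2 ∈ ((g u : 𝓡) : Set V), v1 = v2 ∨ G.Adj v1 v2) := by
        rcases h.2 with ⟨a, ha, b, hb, hab⟩ | ⟨a, ha, b, hb, hab⟩
        · exact Or.inl ⟨a, hg u ha, b, hg v hb, hab⟩
        · exact Or.inr ⟨a, hg v ha, b, hg u hb, hab⟩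
      have hadj : (contactGraph G 𝓡).Adj (g u) (g v) := contactGraph_adj.mpr ⟨heq, hrel⟩
      exact ⟨SimpleGraph.Walk.cons hadj q, by simpa using Nat.succ_le_succ hq⟩

/-- A shortest path in the contact graph of `𝓡`, all of whose regions also belong to a
refinement `𝓡'` of `𝓡`, is also a shortest path in the contact graph of `𝓡'`. -/
theorem shortest_path_in_refinement (G : SimpleGraph V) (𝓡 𝓡' : Set (Set V))
    (hrefine : ∀ A ∈ 𝓡', ∃ B ∈ 𝓡, A ⊆ B)
    {A B : 𝓡} (π : (contactGraph G 𝓡).Walk A B)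
    (hpath : π.IsPath) (hshort : π.length = (contactGraph G 𝓡).dist A B)
    (hsupp : ∀ X ∈ π.support, (X : Set V) ∈ 𝓡') :
    (contactGraph G 𝓡').edist
        ⟨(A : Set V), hsupp A π.start_mem_support⟩
        ⟨(B : Set V), hsupp B π.end_mem_support⟩ = π.length := by
  classical
  set A' : 𝓡' := ⟨(A : Set V), hsupp A π.start_mem_support⟩
  set B' : 𝓡' := ⟨(B : Set V), hsupp B π.end_mem_support⟩
  -- upper bound
  obtain ⟨q, hq⟩ := forward_walk π hsupp
  have hub : (contactGraph G 𝓡').edist A' B' ≤ (π.length : ℕ∞) := by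
    simpa [hq] using SimpleGraph.edist_le q
  -- pullback map
  let g : 𝓡' → 𝓡 := fun X =>
    if h1 : (X : Set V) = (A : Set V) then A
    else if h2 : (X : Set V) = (B : Set V) then B
    else ⟨(hrefine X X.2).choose, (hrefine X X.2).choose_spec.1⟩
  have hg : ∀ X : 𝓡', (X : Set V) ⊆ ((g X : 𝓡) : Set V) := by
    intro X
    by_cases h1 : (X : Set V) = (A : Set V)
    · simp only [g, dif_pos h1]; rw [h1]
    · by_cases h2 : (X : Set V) = (B : Set V)
      · simp only [g, dif_neg h1, dif_pos h2]; rw [h2]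
      · simp only [g, dif_neg h1, dif_neg h2]
        exact (hrefine X X.2).choose_spec.2
  have hgA : g A' = A := by simp [g, A']
  have hgB : g B' = B := by
    by_cases h1 : (B : Set V) = (A : Set V)
    · simp only [g, B', dif_pos h1]
      exact Subtype.ext h1.symm
    · simp [g, B', h1]
  -- lower bound
  have hlb : (π.length : ℕ∞) ≤ (contactGraph G 𝓡').edist A' B' := by
    have hne : (contactGraph G 𝓡').edist A' B' ≠ ⊤ :=
      ne_top_of_le_ne_top (by simp) hub
    obtain ⟨p, hp⟩ := SimpleGraph.exists_walk_of_edist_ne_top hne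
    obtain ⟨w, hw⟩ := pullback_walk g hg p
    have : π.length ≤ (w.copy hgA hgB).length := hshort ▸ SimpleGraph.dist_le (w.copy hgA hgB)
    rw [SimpleGraph.Walk.length_copy] at this
    calc (π.length : ℕ∞) ≤ (w.length : ℕ∞) := by exact_mod_cast this
      _ ≤ (p.length : ℕ∞) := by exact_mod_cast hw
      _ = (contactGraph G 𝓡').edist A' B' := by rw [hp]
  exact le_antisymm hub hlb
end

section
/- Let G be a graph, 𝓡 a family of regions, R ∈ 𝓡, S ⊆ V(G), and let R_a, R_b be two connected components of G[R \ S] (subregions of R produced by shattering R by S). If R is connected and S is the vertex set of a union of regions each within contact-graph-distance 1 of a path π that is a shortest path in the contact graph of 𝓡, then in the shattered family 𝓡' = Shatter(𝓡, S) there is a walk of length at most 8 in the contact graph of 𝓡' from R_a to R_b whose internal regions all intersect S. -/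
variable {V : Type*}

/-- Pieces obtained by shattering a region `R` by a vertex set `S`. -/
def shatterPieces (G : SimpleGraph V) (R S : Set V) : Set (Set V) :=
  {A | (∃ c : (G.induce (R \ S)).ConnectedComponent, A = Subtype.val '' c.supp) ∨
       (∃ c : (G.induce (R ∩ S)).ConnectedComponent, A = Subtype.val '' c.supp)}

/-- The family obtained by shattering every region of `𝓡` by `S`. -/
def shatterFam (G : SimpleGraph V) (𝓡 : Set (Set V)) (S : Set V) : Set (Set V) :=
  ⋃ R ∈ 𝓡, shatterPieces G R S

open SimpleGraph

section helpers

lemma short_walk {W' : Type*} {H : SimpleGraph W'} {x y : W'} (h : x = y ∨ H.Adj x y) :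
    ∃ w : H.Walk x y, w.length ≤ 1 ∧ ∀ z ∈ w.support, z = x ∨ z = y := by
  rcases h with rfl | h
  · exact ⟨.nil, by simp, by simp⟩
  · exact ⟨.cons h .nil, by simp, by intro z hz; simpa using hz⟩

lemma eq_or_adj_of_edist_le_one {W' : Type*} {H : SimpleGraph W'} {x y : W'}
    (h : H.edist x y ≤ 1) : x = y ∨ H.Adj x y := by
  rcases eq_or_ne (H.edist x y) 0 with h0 | h0
  · exact Or.inl (SimpleGraph.edist_eq_zero_iff.mp h0)
  · exact Or.inr (SimpleGraph.edist_eq_one_iff_adj.mp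
      (le_antisymm h (ENat.one_le_iff_ne_zero.mpr h0)))

lemma geodesic_take {W' : Type*} [DecidableEq W'] {H : SimpleGraph W'} {p q : W'} (π : H.Walk p q)
    (hshort : π.length = H.dist p q) {u : W'} (hu : u ∈ π.support) :
    (π.takeUntil u hu).length = H.dist p u ∧ (π.dropUntil u hu).length = H.dist u q := by
  have hsum : (π.takeUntil u hu).length + (π.dropUntil u hu).length = π.length := by
    rw [← SimpleGraph.Walk.length_append, π.take_spec hu]
  have h1 : H.dist p u ≤ (π.takeUntil u hu).length := SimpleGraph.dist_le _
  have h2 : H.dist u q ≤ (π.dropUntil u hu).length := SimpleGraph.dist_le _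
  obtain ⟨t', ht'⟩ := (π.takeUntil u hu).reachable.exists_walk_length_eq_dist
  obtain ⟨d', hd'⟩ := (π.dropUntil u hu).reachable.exists_walk_length_eq_dist
  have h3 : H.dist p q ≤ t'.length + (π.dropUntil u hu).length := by
    simpa [SimpleGraph.Walk.length_append] using
      SimpleGraph.dist_le (t'.append (π.dropUntil u hu))
  have h4 : H.dist p q ≤ (π.takeUntil u hu).length + d'.length := by
    simpa [SimpleGraph.Walk.length_append] using
      SimpleGraph.dist_le ((π.takeUntil u hu).append d')
  omega

lemma geodesic_subwalk {W' : Type*} [DecidableEq W'] {H : SimpleGraph W'} {p q : W'}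
    (π : H.Walk p q)
    (hshort : π.length = H.dist p q) {u v : W'} (hu : u ∈ π.support) (hv : v ∈ π.support) :
    ∃ σ : H.Walk u v, σ.length = H.dist u v ∧ ∀ z ∈ σ.support, z ∈ π.support := by
  by_cases hv' : v ∈ (π.takeUntil u hu).support
  · have ht := (geodesic_take π hshort hu).1
    have := (geodesic_take (π.takeUntil u hu) ht hv').2
    refine ⟨((π.takeUntil u hu).dropUntil v hv').reverse, ?_, ?_⟩
    · rw [SimpleGraph.Walk.length_reverse, this, SimpleGraph.dist_comm]
    · intro z hz
      rw [SimpleGraph.Walk.support_reverse, List.mem_reverse] at hz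
      exact (π.support_takeUntil_subset hu)
        (((π.takeUntil u hu).support_dropUntil_subset hv') hz)
  · have hv'' : v ∈ (π.dropUntil u hu).support := by
      have := hv
      rw [← π.take_spec hu, SimpleGraph.Walk.mem_support_append_iff] at this
      tauto
    have hd := (geodesic_take π hshort hu).2
    have := (geodesic_take (π.dropUntil u hu) hd hv'').1
    refine ⟨(π.dropUntil u hu).takeUntil v hv'', this, ?_⟩
    intro z hz
    exact (π.support_dropUntil_subset hu)
      (((π.dropUntil u hu).support_takeUntil_subset hv'') hz)

lemma adj_transfer {G : SimpleGraph V} {F1 F2 : Set (Set V)} {X Y : F1}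
    (h : (contactGraph G F1).Adj X Y) (hX : (X : Set V) ∈ F2) (hY : (Y : Set V) ∈ F2) :
    (contactGraph G F2).Adj ⟨↑X, hX⟩ ⟨↑Y, hY⟩ := by
  rw [contactGraph, SimpleGraph.fromRel_adj] at h ⊢
  exact ⟨fun hxy => h.1 (Subtype.ext (Subtype.mk_eq_mk.mp hxy)), h.2⟩

lemma walk_transfer {G : SimpleGraph V} {F1 F2 : Set (Set V)} :
    ∀ {X Y : F1} (w : (contactGraph G F1).Walk X Y)
      (hsub : ∀ Z ∈ w.support, (Z : Set V) ∈ F2),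
      ∃ w' : (contactGraph G F2).Walk ⟨X, hsub X w.start_mem_support⟩ ⟨Y, hsub Y w.end_mem_support⟩,
        w'.length = w.length ∧ ∀ Z ∈ w'.support, ∃ Z0 ∈ w.support, (Z : Set V) = ↑Z0
  | X, _, .nil, hsub => by
    refine ⟨.nil, rfl, ?_⟩
    intro Z hZ
    simp only [SimpleGraph.Walk.support_nil, List.mem_singleton] at hZ
    subst hZ
    exact ⟨X, by simp, rfl⟩
  | a, Y, @SimpleGraph.Walk.cons _ _ _ m _ h p, hsub => by
    have hm : (m : Set V) ∈ F2 := hsub m (by simp)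
    have hsub' : ∀ Z ∈ p.support, (Z : Set V) ∈ F2 := fun Z hZ => hsub Z (by simp [hZ])
    obtain ⟨w', hl, hs⟩ := walk_transfer p hsub'
    refine ⟨.cons (adj_transfer h (hsub a (by simp)) hm) w', by simp [hl], ?_⟩
    intro Z hZ
    rw [SimpleGraph.Walk.support_cons] at hZ
    rcases List.mem_cons.mp hZ with rfl | hZ
    · exact ⟨a, by simp, rfl⟩
    · obtain ⟨Z0, hZ0, e⟩ := hs Z hZ
      exact ⟨Z0, by simp [hZ0], e⟩

lemma exists_boundary {R S : Set V} (G : SimpleGraph V) :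
    ∀ {a b : ↥R} (_p : (G.induce R).Walk a b) (ha : (a : V) ∉ S), (b : V) ∈ S →
    ∃ (x y : V) (hx : x ∈ R \ S), y ∈ R ∩ S ∧ G.Adj x y ∧
      (G.induce (R \ S)).Reachable ⟨a, ⟨a.2, ha⟩⟩ ⟨x, hx⟩ := by
  intro a b p
  induction p with
  | nil => intro ha hb; exact absurd hb ha
  | @cons a m b h q ih =>
    intro ha hb
    by_cases hm : (m : V) ∈ S
    · exact ⟨a, m, ⟨a.2, ha⟩, ⟨m.2, hm⟩, h, Reachable.refl _⟩
    · obtain ⟨x, y, hx, hy, hadj, hreach⟩ := ih hm hb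
      have hadj' : (G.induce (R \ S)).Adj ⟨a, ⟨a.2, ha⟩⟩ ⟨m, ⟨m.2, hm⟩⟩ := h
      exact ⟨x, y, hx, hy, hadj, hadj'.reachable.trans hreach⟩

end helpers

/-- After shattering by the vertex set `S` of the union of all regions within contact
distance 1 of a shortest path `π`, any two subregions of a region `R` produced by the
shattering (components of `G[R \ S]`) are joined in the shattered contact graph by a walk
of length at most 8 whose internal regions all intersect `S`. -/
theorem dist_after_shatter (G : SimpleGraph V) (𝓡 : Set (Set V))
    (hconn : ∀ T ∈ 𝓡, (G.induce T).Connected)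
    {P Q : 𝓡} (π : (contactGraph G 𝓡).Walk P Q) (hpath : π.IsPath)
    (hshort : π.length = (contactGraph G 𝓡).dist P Q)
    (Sinit : Set (Set V))
    (hSinit : Sinit =
      {T | ∃ hT : T ∈ 𝓡, ∃ A ∈ π.support, (contactGraph G 𝓡).edist ⟨T, hT⟩ A ≤ 1})
    (S : Set V) (hS : S = ⋃₀ Sinit)
    (R : Set V) (hR : R ∈ 𝓡)
    (R_a R_b : Set V)
    (ha : ∃ c : (G.induce (R \ S)).ConnectedComponent, R_a = Subtype.val '' c.supp)
    (hb : ∃ c : (G.induce (R \ S)).ConnectedComponent, R_b = Subtype.val '' c.supp)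
    (ha' : R_a ∈ shatterFam G 𝓡 S) (hb' : R_b ∈ shatterFam G 𝓡 S) :
    ∃ W : (contactGraph G (shatterFam G 𝓡 S)).Walk ⟨R_a, ha'⟩ ⟨R_b, hb'⟩,
      W.length ≤ 8 ∧
      ∀ A ∈ W.support, A ≠ (⟨R_a, ha'⟩ : shatterFam G 𝓡 S) →
        A ≠ (⟨R_b, hb'⟩ : shatterFam G 𝓡 S) → ((A : Set V) ∩ S).Nonempty := by
  classical
  -- basic facts about Sinit
  have hSinitR : ∀ T ∈ Sinit, T ∈ 𝓡 := by
    intro T hT; rw [hSinit] at hT; exact hT.1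
  have hTsubS : ∀ T ∈ Sinit, T ⊆ S := by
    intro T hT; rw [hS]; exact Set.subset_sUnion_of_mem hT
  have hmemS : ∀ v ∈ S, ∃ T ∈ Sinit, v ∈ T := by
    intro v hv; rw [hS] at hv; exact hv
  have hTne : ∀ T ∈ Sinit, T.Nonempty := by
    intro T hT
    have := (hconn T (hSinitR T hT)).nonempty
    exact Set.nonempty_coe_sort.mp this
  have hfin : ∀ Tset ∈ Sinit, (Tset ∩ S).Nonempty := by
    intro Tset hT
    obtain ⟨t, ht⟩ := hTne Tset hT
    exact ⟨t, ht, hTsubS Tset hT ht⟩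
  have hsupport : ∀ A ∈ π.support, (A : Set V) ∈ Sinit := by
    intro A hA
    rw [hSinit]
    refine ⟨A.2, A, hA, ?_⟩
    show (contactGraph G 𝓡).edist A A ≤ 1
    rw [SimpleGraph.edist_self]
    exact zero_le_one
  have hTfam : ∀ T ∈ Sinit, T ∈ shatterFam G 𝓡 S := by
    intro T hT
    have hTR := hSinitR T hT
    have hTS : T ∩ S = T := Set.inter_eq_left.mpr (hTsubS T hT)
    rw [shatterFam, Set.mem_iUnion₂]
    refine ⟨T, hTR, Or.inr ?_⟩
    obtain ⟨v, hv⟩ := hTne T hT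
    rw [hTS]
    refine ⟨(G.induce T).connectedComponentMk ⟨v, hv⟩, ?_⟩
    ext x
    simp only [Set.mem_image, SimpleGraph.ConnectedComponent.mem_supp_iff]
    constructor
    · intro hx
      exact ⟨⟨x, hx⟩, SimpleGraph.ConnectedComponent.sound
        ((hconn T hTR).preconnected ⟨x, hx⟩ ⟨v, hv⟩), rfl⟩
    · rintro ⟨y, -, rfl⟩; exact y.2
  by_cases hRS : (R ∩ S).Nonempty
  · -- main case
    obtain ⟨v0, hv0⟩ := hRS
    -- boundary for R_a
    obtain ⟨c, hca⟩ := ha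
    obtain ⟨u, hu⟩ := c.exists_rep
    obtain ⟨p⟩ := (hconn R hR).preconnected ⟨u.1, u.2.1⟩ ⟨v0, hv0.1⟩
    obtain ⟨xa, ya, hxa, hya, hadja, hreacha⟩ := exists_boundary G p u.2.2 hv0.2
    have hxaRa : xa ∈ R_a := by
      rw [hca]
      refine ⟨⟨xa, hxa⟩, ?_, rfl⟩
      rw [SimpleGraph.ConnectedComponent.mem_supp_iff, ← hu]
      exact SimpleGraph.ConnectedComponent.sound hreacha.symm
    obtain ⟨T_a, hTaSinit, hyaTa⟩ := hmemS ya hya.2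
    -- boundary for R_b
    obtain ⟨c', hcb⟩ := hb
    obtain ⟨u', hu'⟩ := c'.exists_rep
    obtain ⟨p'⟩ := (hconn R hR).preconnected ⟨u'.1, u'.2.1⟩ ⟨v0, hv0.1⟩
    obtain ⟨xb, yb, hxb, hyb, hadjb, hreachb⟩ := exists_boundary G p' u'.2.2 hv0.2
    have hxbRb : xb ∈ R_b := by
      rw [hcb]
      refine ⟨⟨xb, hxb⟩, ?_, rfl⟩
      rw [SimpleGraph.ConnectedComponent.mem_supp_iff, ← hu']
      exact SimpleGraph.ConnectedComponent.sound hreachb.symm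
    obtain ⟨T_b, hTbSinit, hybTb⟩ := hmemS yb hyb.2
    -- members of 𝓡 and nearby path vertices
    have hTa' := hTaSinit; rw [hSinit] at hTa'
    obtain ⟨hTa𝓡, A_a, hAa, hedista⟩ := hTa'
    have hTb' := hTbSinit; rw [hSinit] at hTb'
    obtain ⟨hTb𝓡, A_b, hAb, hedistb⟩ := hTb'
    set Xa : ↥𝓡 := ⟨T_a, hTa𝓡⟩ with hXa
    set Xb : ↥𝓡 := ⟨T_b, hTb𝓡⟩ with hXb
    set XR : ↥𝓡 := ⟨R, hR⟩ with hXR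
    -- short walks
    obtain ⟨w1, hw1l, hw1s⟩ := short_walk (eq_or_adj_of_edist_le_one hedista)
    have hedistb' : A_b = Xb ∨ (contactGraph G 𝓡).Adj A_b Xb := by
      rcases eq_or_adj_of_edist_le_one hedistb with h | h
      · exact Or.inl h.symm
      · exact Or.inr h.symm
    obtain ⟨w2, hw2l, hw2s⟩ := short_walk hedistb'
    -- T_a, T_b are close to R in the contact graph of 𝓡
    have eTaR : Xa = XR ∨ (contactGraph G 𝓡).Adj Xa XR := by
      by_cases hEq : T_a = R
      · exact Or.inl (Subtype.ext hEq)
      · refine Or.inr ?_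
        rw [contactGraph, SimpleGraph.fromRel_adj]
        exact ⟨fun hh => hEq (Subtype.mk_eq_mk.mp hh),
          Or.inl ⟨ya, hyaTa, ya, hya.1, Or.inl rfl⟩⟩
    have eRTb : XR = Xb ∨ (contactGraph G 𝓡).Adj XR Xb := by
      by_cases hEq : R = T_b
      · exact Or.inl (Subtype.ext hEq)
      · refine Or.inr ?_
        rw [contactGraph, SimpleGraph.fromRel_adj]
        exact ⟨fun hh => hEq (Subtype.mk_eq_mk.mp hh),
          Or.inl ⟨yb, hyb.1, yb, hybTb, Or.inl rfl⟩⟩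
    obtain ⟨qa, hqal, -⟩ := short_walk eTaR
    obtain ⟨qb, hqbl, -⟩ := short_walk eRTb
    -- dist A_a A_b ≤ 4
    have hdistAB : (contactGraph G 𝓡).dist A_a A_b ≤ 4 := by
      have := SimpleGraph.dist_le
        (w1.reverse.append (qa.append (qb.append w2.reverse)))
      simp only [SimpleGraph.Walk.length_append, SimpleGraph.Walk.length_reverse] at this
      omega
    obtain ⟨σ, hσl, hσs⟩ := geodesic_subwalk π hshort hAa hAb
    -- the walk in the contact graph of 𝓡
    set ω := w1.append (σ.append w2) with hω
    have hωl : ω.length ≤ 6 := by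
      rw [hω]
      simp only [SimpleGraph.Walk.length_append]
      omega
    have hωSinit : ∀ Z ∈ ω.support, (Z : Set V) ∈ Sinit := by
      intro Z hZ
      rw [hω, SimpleGraph.Walk.mem_support_append_iff] at hZ
      rcases hZ with hZ | hZ
      · rcases hw1s Z hZ with rfl | rfl
        · exact hTaSinit
        · exact hsupport _ hAa
      · rw [SimpleGraph.Walk.mem_support_append_iff] at hZ
        rcases hZ with hZ | hZ
        · exact hsupport _ (hσs Z hZ)
        · rcases hw2s Z hZ with rfl | rfl
          · exact hsupport _ hAb
          · exact hTbSinit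
    have hωsub : ∀ Z ∈ ω.support, (Z : Set V) ∈ shatterFam G 𝓡 S :=
      fun Z hZ => hTfam _ (hωSinit Z hZ)
    obtain ⟨ω', hω'l, hω's⟩ := walk_transfer ω hωsub
    -- end adjacencies
    have hRasub : R_a ⊆ R \ S := by
      rw [hca]; rintro x ⟨⟨y, hy⟩, -, rfl⟩; exact hy
    have hRbsub : R_b ⊆ R \ S := by
      rw [hcb]; rintro x ⟨⟨y, hy⟩, -, rfl⟩; exact hy
    have hRaTa_ne : R_a ≠ T_a := by
      intro hEq
      exact (hRasub (hEq ▸ hyaTa)).2 hya.2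
    have hRbTb_ne : R_b ≠ T_b := by
      intro hEq
      exact (hRbsub (hEq ▸ hybTb)).2 hyb.2
    have adjA : (contactGraph G (shatterFam G 𝓡 S)).Adj ⟨R_a, ha'⟩
        ⟨T_a, hTfam T_a hTaSinit⟩ := by
      rw [contactGraph, SimpleGraph.fromRel_adj]
      exact ⟨fun hh => hRaTa_ne (Subtype.mk_eq_mk.mp hh),
        Or.inl ⟨xa, hxaRa, ya, hyaTa, Or.inr hadja⟩⟩
    have adjB : (contactGraph G (shatterFam G 𝓡 S)).Adj ⟨T_b, hTfam T_b hTbSinit⟩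
        ⟨R_b, hb'⟩ := by
      rw [contactGraph, SimpleGraph.fromRel_adj]
      exact ⟨fun hh => hRbTb_ne (Subtype.mk_eq_mk.mp hh).symm,
        Or.inl ⟨yb, hybTb, xb, hxbRb, Or.inr hadjb.symm⟩⟩
    refine ⟨.cons adjA (ω'.append (.cons adjB .nil)), ?_, ?_⟩
    · simp only [SimpleGraph.Walk.length_cons, SimpleGraph.Walk.length_append,
        SimpleGraph.Walk.length_nil]
      omega
    · intro A hA h1 h2
      rw [SimpleGraph.Walk.support_cons] at hA
      rcases List.mem_cons.mp hA with rfl | hA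
      · exact absurd rfl h1
      rw [SimpleGraph.Walk.mem_support_append_iff] at hA
      rcases hA with hA | hA
      · obtain ⟨Z0, hZ0, e⟩ := hω's A hA
        have : (Z0 : Set V) ∈ Sinit := hωSinit Z0 hZ0
        rw [e]
        exact hfin _ this
      · rw [SimpleGraph.Walk.support_cons, SimpleGraph.Walk.support_nil] at hA
        rcases List.mem_cons.mp hA with rfl | hA
        · exact hfin _ hTbSinit
        · rw [List.mem_singleton] at hA
          exact absurd hA h2
  · -- R ∩ S empty : R_a = R_b
    obtain ⟨c, hca⟩ := ha
    obtain ⟨c', hcb⟩ := hb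
    have hdiff : R \ S = R := by
      rw [Set.not_nonempty_iff_eq_empty] at hRS
      ext x
      constructor
      · exact fun h => h.1
      · intro hx
        refine ⟨hx, fun hxS => ?_⟩
        exact absurd (show x ∈ R ∩ S from ⟨hx, hxS⟩) (by rw [hRS]; exact id)
    have hconn' : (G.induce (R \ S)).Connected := by rw [hdiff]; exact hconn R hR
    obtain ⟨u, hu⟩ := c.exists_rep
    obtain ⟨v, hv⟩ := c'.exists_rep
    have hcc : c = c' := by
      rw [← hu, ← hv]
      exact SimpleGraph.ConnectedComponent.sound (hconn'.preconnected u v)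
    obtain rfl : R_a = R_b := by rw [hca, hcb, hcc]
    refine ⟨.nil, by simp, ?_⟩
    intro A hA h1 _
    rw [SimpleGraph.Walk.support_nil, List.mem_singleton] at hA
    exact absurd hA h1
end

section
/- Let G be a graph with a family of regions 𝓡, and let H be a weighted graph on vertex set 𝓒 ∪ 𝓡, where 𝓒 is a partition of V(G) into connected clusters; edges of H join clusters adjacent in G, and each region R ∈ 𝓡 is joined to exactly one cluster intersecting it; all edges have weight w > 0. Suppose for every region R ∈ 𝓡 and any two vertices of R there is a path in G intersecting at most β clusters. Then for any two regions R_a, R_b at contact-graph distance d = δ_𝓡(R_a, R_b), we have δ_H(R_a, R_b) ≤ w · (2β + 1) · d. -/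
variable {V ι ρ : Type*}

private lemma contract_walk {G : SimpleGraph V} {C : ι → Set V} {rep : ρ → ι}
    (cl : V → ι) (hcl : ∀ v, v ∈ C (cl v)) {u v : V} (p : G.Walk u v) :
    ∃ q : (clusterEmulator G C rep).Walk (Sum.inl (cl u)) (Sum.inl (cl v)),
      ∀ z ∈ q.support, ∃ y ∈ p.support, z = Sum.inl (cl y) := by
  induction p with
  | nil => exact ⟨.nil, by simp⟩
  | @cons a b c h p ih =>
    obtain ⟨q, hq⟩ := ih
    by_cases hab : cl a = cl b
    · refine ⟨q.copy (by rw [hab]) rfl, ?_⟩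
      intro z hz
      rw [SimpleGraph.Walk.support_copy] at hz
      obtain ⟨y, hy, rfl⟩ := hq z hz
      exact ⟨y, by simp [hy], rfl⟩
    · have hadj : (clusterEmulator G C rep).Adj (Sum.inl (cl a)) (Sum.inl (cl b)) := by
        rw [clusterEmulator, SimpleGraph.fromRel_adj]
        exact ⟨by simp [hab], Or.inl ⟨a, hcl a, b, hcl b, h⟩⟩
      refine ⟨.cons hadj q, ?_⟩
      intro z hz
      rw [SimpleGraph.Walk.support_cons, List.mem_cons] at hz
      rcases hz with rfl | hz
      · exact ⟨a, by simp, rfl⟩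
      · obtain ⟨y, hy, rfl⟩ := hq z hz
        exact ⟨y, by simp [hy], rfl⟩

private lemma short_walk_s14 {W : Type*} {G : SimpleGraph W} {u v : W}
    (q : G.Walk u v) (t : Finset W) (ht : ∀ z ∈ q.support, z ∈ t) :
    ∃ q' : G.Walk u v, q'.length + 1 ≤ t.card := by
  classical
  refine ⟨q.bypass, ?_⟩
  have hnodup : q.bypass.support.Nodup := q.bypass_isPath.support_nodup
  have hsub : q.bypass.support.toFinset ⊆ t := by
    intro z hz
    exact ht z (q.support_bypass_subset (List.mem_toFinset.mp hz))
  calc q.bypass.length + 1 = q.bypass.support.length := (q.bypass.length_support).symm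
    _ = q.bypass.support.toFinset.card := (List.toFinset_card_of_nodup hnodup).symm
    _ ≤ t.card := Finset.card_le_card hsub

private lemma edge_bound_aux {G : SimpleGraph V} {C : ι → Set V} {Reg : ρ → Set V}
    {β : ℕ}
    (hpart : ∀ v : V, ∃! i : ι, v ∈ C i)
    (hscat : ∀ r : ρ, ∀ u ∈ Reg r, ∀ v ∈ Reg r, ∃ p : G.Walk u v, ∃ s : Finset ι,
      s.card ≤ β ∧ ∀ x ∈ p.support, ∀ i : ι, x ∈ C i → i ∈ s)
    (rep : ρ → ι) (hrep : ∀ r : ρ, (C (rep r) ∩ Reg r).Nonempty)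
    {a b : ρ} {v1 v2 : V} (hv1 : v1 ∈ Reg a) (hv2 : v2 ∈ Reg b)
    (hmid : v1 = v2 ∨ G.Adj v1 v2) :
    (clusterEmulator G C rep).edist (Sum.inr a) (Sum.inr b) ≤ ((2 * β + 1 : ℕ) : ℕ∞) := by
  classical
  set cl : V → ι := fun v => (hpart v).choose with hcl_def
  have hcl : ∀ v, v ∈ C (cl v) := fun v => (hpart v).choose_spec.1
  have hcl_unique : ∀ v i, v ∈ C i → cl v = i := by
    intro v i hvi
    exact ((hpart v).choose_spec.2 i hvi).symm
  obtain ⟨xa, hxaC, hxaR⟩ := hrep a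
  obtain ⟨xb, hxbC, hxbR⟩ := hrep b
  obtain ⟨p1, s1, hs1card, hs1⟩ := hscat a xa hxaR v1 hv1
  obtain ⟨p2, s2, hs2card, hs2⟩ := hscat b v2 hv2 xb hxbR
  obtain ⟨q1, hq1⟩ := contract_walk (rep := rep) cl hcl p1
  obtain ⟨q2, hq2⟩ := contract_walk (rep := rep) cl hcl p2
  -- shorten q1, q2
  obtain ⟨q1', hq1'⟩ := short_walk_s14 q1 (s1.image Sum.inl) (by
    intro z hz
    obtain ⟨y, hy, rfl⟩ := hq1 z hz
    exact Finset.mem_image_of_mem _ (hs1 y hy (cl y) (hcl y)))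
  obtain ⟨q2', hq2'⟩ := short_walk_s14 q2 (s2.image Sum.inl) (by
    intro z hz
    obtain ⟨y, hy, rfl⟩ := hq2 z hz
    exact Finset.mem_image_of_mem _ (hs2 y hy (cl y) (hcl y)))
  have hl1 : q1'.length + 1 ≤ β := hq1'.trans ((Finset.card_image_le).trans hs1card)
  have hl2 : q2'.length + 1 ≤ β := hq2'.trans ((Finset.card_image_le).trans hs2card)
  -- middle walk
  have hmid' : ∃ m : (clusterEmulator G C rep).Walk (Sum.inl (cl v1)) (Sum.inl (cl v2)),
      m.length ≤ 1 := by
    rcases hmid with rfl | hadj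
    · exact ⟨.nil, by simp⟩
    · by_cases h12 : cl v1 = cl v2
      · exact ⟨SimpleGraph.Walk.nil.copy (by rw [h12]) rfl, by simp⟩
      · have he : (clusterEmulator G C rep).Adj (Sum.inl (cl v1)) (Sum.inl (cl v2)) := by
          rw [clusterEmulator, SimpleGraph.fromRel_adj]
          exact ⟨by simp [h12], Or.inl ⟨v1, hcl v1, v2, hcl v2, hadj⟩⟩
        exact ⟨he.toWalk, by simp⟩
  obtain ⟨m, hm⟩ := hmid'
  -- pendant edges
  have hea : cl xa = rep a := hcl_unique xa _ hxaC
  have heb : cl xb = rep b := hcl_unique xb _ hxbC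
  have hA : (clusterEmulator G C rep).Adj (Sum.inr a) (Sum.inl (cl xa)) := by
    rw [clusterEmulator, SimpleGraph.fromRel_adj]
    exact ⟨by simp, Or.inr hea⟩
  have hB : (clusterEmulator G C rep).Adj (Sum.inl (cl xb)) (Sum.inr b) := by
    rw [clusterEmulator, SimpleGraph.fromRel_adj]
    exact ⟨by simp, Or.inl heb⟩
  -- assemble
  let Wmid : (clusterEmulator G C rep).Walk (Sum.inl (cl xa)) (Sum.inl (cl xb)) :=
    (q1'.append m).append q2'
  let Wfull : (clusterEmulator G C rep).Walk (Sum.inr a) (Sum.inr b) :=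
    SimpleGraph.Walk.cons hA (Wmid.concat hB)
  have hlen : Wfull.length ≤ 2 * β + 1 := by
    have : Wfull.length = q1'.length + m.length + q2'.length + 2 := by
      simp only [Wfull, Wmid, SimpleGraph.Walk.length_cons,
        SimpleGraph.Walk.length_concat, SimpleGraph.Walk.length_append]
    omega
  calc (clusterEmulator G C rep).edist (Sum.inr a) (Sum.inr b) ≤ Wfull.length :=
        SimpleGraph.Walk.edist_le Wfull
    _ ≤ ((2 * β + 1 : ℕ) : ℕ∞) := by exact_mod_cast Nat.cast_le.mpr hlen

/-- Upper bound for the emulator: with every edge of `H` weighing `w > 0`, the weighted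
distance in `H` between the pendant vertices of two regions is at most
`w · (2β + 1) · δ_𝓡(R_a, R_b)`. -/
theorem emulator_upper_bound (G : SimpleGraph V) (C : ι → Set V) (Reg : ρ → Set V)
    (β w : ℕ) (hw : 0 < w)
    (hpart : ∀ v : V, ∃! i : ι, v ∈ C i)
    (hCconn : ∀ i : ι, (G.induce (C i)).Connected)
    (hRconn : ∀ r : ρ, (G.induce (Reg r)).Connected)
    (hscat : ∀ r : ρ, ∀ u ∈ Reg r, ∀ v ∈ Reg r, ∃ p : G.Walk u v, ∃ s : Finset ι,
      s.card ≤ β ∧ ∀ x ∈ p.support, ∀ i : ι, x ∈ C i → i ∈ s)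
    (rep : ρ → ι) (hrep : ∀ r : ρ, (C (rep r) ∩ Reg r).Nonempty) :
    ∀ r_a r_b : ρ,
      (w : ℕ∞) * (clusterEmulator G C rep).edist (Sum.inr r_a) (Sum.inr r_b) ≤
        (w : ℕ∞) * (2 * (β : ℕ∞) + 1) * (contactGraphIdx G Reg).edist r_a r_b := by
  intro r_a r_b
  have edge_bound : ∀ x y : ρ, (contactGraphIdx G Reg).Adj x y →
      (clusterEmulator G C rep).edist (Sum.inr x) (Sum.inr y) ≤ ((2 * β + 1 : ℕ) : ℕ∞) := by
    intro x y hxy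
    rw [contactGraphIdx, SimpleGraph.fromRel_adj] at hxy
    rcases hxy.2 with ⟨v1, hv1, v2, hv2, hm⟩ | ⟨v1, hv1, v2, hv2, hm⟩
    · exact edge_bound_aux hpart hscat rep hrep hv1 hv2 hm
    · rw [SimpleGraph.edist_comm]
      exact edge_bound_aux hpart hscat rep hrep hv1 hv2 hm
  have key : ∀ {x y : ρ} (P : (contactGraphIdx G Reg).Walk x y),
      (clusterEmulator G C rep).edist (Sum.inr x) (Sum.inr y) ≤
        ((2 * β + 1 : ℕ) : ℕ∞) * P.length := by
    intro x y P
    induction P with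
    | nil => simp
    | @cons x z y h P ih =>
      calc (clusterEmulator G C rep).edist (Sum.inr x) (Sum.inr y)
          ≤ (clusterEmulator G C rep).edist (Sum.inr x) (Sum.inr z) +
            (clusterEmulator G C rep).edist (Sum.inr z) (Sum.inr y) :=
            SimpleGraph.edist_triangle
        _ ≤ ((2 * β + 1 : ℕ) : ℕ∞) + ((2 * β + 1 : ℕ) : ℕ∞) * P.length :=
            add_le_add (edge_bound x z h) ih
        _ = ((2 * β + 1 : ℕ) : ℕ∞) * (SimpleGraph.Walk.cons h P).length := by
            rw [SimpleGraph.Walk.length_cons]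
            push_cast
            ring
  by_cases htop : (contactGraphIdx G Reg).edist r_a r_b = ⊤
  · rw [htop]
    have h1 : (w : ℕ∞) * (2 * (β : ℕ∞) + 1) ≠ 0 := by
      apply mul_ne_zero
      · exact_mod_cast hw.ne'
      · intro h
        rw [add_eq_zero] at h
        simp at h
    rw [ENat.mul_top h1]
    exact le_top
  · obtain ⟨P, hP⟩ := SimpleGraph.exists_walk_of_edist_ne_top htop
    have h2 : (clusterEmulator G C rep).edist (Sum.inr r_a) (Sum.inr r_b) ≤
        ((2 * β + 1 : ℕ) : ℕ∞) * (contactGraphIdx G Reg).edist r_a r_b := by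
      rw [← hP]
      exact key P
    calc (w : ℕ∞) * (clusterEmulator G C rep).edist (Sum.inr r_a) (Sum.inr r_b)
        ≤ (w : ℕ∞) * (((2 * β + 1 : ℕ) : ℕ∞) * (contactGraphIdx G Reg).edist r_a r_b) :=
          mul_le_mul_right h2 _
      _ = (w : ℕ∞) * (2 * (β : ℕ∞) + 1) * (contactGraphIdx G Reg).edist r_a r_b := by
          push_cast
          ring
end
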